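/- Suppose ϑ ∈ I is an invariant state, i.e., the unique fluid model solution ζ with initial measure ϑ satisfies ζ(t) = ϑ for all t ≥ 0. Then w_l ≤ w_ϑ ≤ w_u and ϑ = θ^{w_ϑ}. -/

import Mathlib

open MeasureTheory Set Filter Topology
open scoped ENNReal

noncomputable section

namespace OverloadedFIFO

/-- The complement `G(x) = Γ((x, ∞))` of the cumulative distribution function of `Γ`. -/
def Gk (Γ : MeasureTheory.Measure ℝ) (x : ℝ) : ℝ := (Γ (Set.Ioi x)).toReal

/-- Model data: `K` job classes with arrival rates `lam`, service rates `mu`, and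
deadline (patience) distributions `Γ`, in the overloaded regime `ρ > 1`.  Each `Γ k` is a
Borel probability measure on `[0,∞)` (no mass on negatives), with continuous c.d.f.
(no atoms, in particular `Γ k {0} = 0`) and finite mean. -/
structure Data (K : ℕ) where
  lam : Fin K → ℝ
  mu : Fin K → ℝ
  Γ : Fin K → MeasureTheory.Measure ℝ
  lam_pos : ∀ k, 0 < lam k
  mu_pos : ∀ k, 0 < mu k
  Γ_prob : ∀ k, MeasureTheory.IsProbabilityMeasure (Γ k)
  Γ_null_neg : ∀ k, Γ k (Set.Iio 0) = 0
  Γ_noAtom : ∀ k, ∀ x : ℝ, Γ k {x} = 0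
  Γ_finite_mean : ∀ k, MeasureTheory.Integrable id (Γ k)
  rho_gt_one : 1 < ∑ k, lam k / mu k

instance {K : ℕ} (D : Data K) (k : Fin K) : IsProbabilityMeasure (D.Γ k) := D.Γ_prob k

/-- `ρ_k = λ_k / μ_k`. -/
def Data.rho {K : ℕ} (D : Data K) (k : Fin K) : ℝ := D.lam k / D.mu k

/-- `ρ = Σ_k ρ_k`. -/
def Data.rhoTot {K : ℕ} (D : Data K) : ℝ := ∑ k, D.rho k

/-- A workload fluid model solution: a nonnegative function `w` on `[0,∞)` satisfying
`w(t) = w(0) + Σ_k ρ_k ∫_0^t G_k(w(s)) ds − t` for all `t ≥ 0`. -/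
def IsWorkloadSol {K : ℕ} (D : Data K) (w : ℝ → ℝ) : Prop :=
  (∀ t : ℝ, 0 ≤ t → 0 ≤ w t) ∧
  (∀ k : Fin K, ∀ t : ℝ, 0 ≤ t →
    IntervalIntegrable (fun s => Gk (D.Γ k) (w s)) volume 0 t) ∧
  (∀ t : ℝ, 0 ≤ t →
    w t = w 0 + (∑ k, D.rho k * ∫ s in (0:ℝ)..t, Gk (D.Γ k) (w s)) - t)

/-- `w_l = sup {u ≥ 0 : Σ_k ρ_k G_k(u) > 1}`. -/
def wl {K : ℕ} (D : Data K) : ℝ :=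
  sSup {u : ℝ | 0 ≤ u ∧ 1 < ∑ k, D.rho k * Gk (D.Γ k) u}

/-- `w_u = sup {u ≥ 0 : Σ_k ρ_k G_k(u) ≥ 1}`. -/
def wu {K : ℕ} (D : Data K) : ℝ :=
  sSup {u : ℝ | 0 ≤ u ∧ 1 ≤ ∑ k, D.rho k * Gk (D.Γ k) u}

/-- `d_max = max_k sup {x ≥ 0 : G_k(x) > 0} ∈ (0,∞]`, as an extended nonnegative real. -/
def dmax {K : ℕ} (D : Data K) : ℝ≥0∞ :=
  ⨆ k, sSup (ENNReal.ofReal '' {x : ℝ | 0 ≤ x ∧ 0 < Gk (D.Γ k) x})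

/-- `τ(t) = inf {s ∈ [0,t] : w(s) + s ≥ t}`. -/
def tauF (w : ℝ → ℝ) (t : ℝ) : ℝ := sInf {s : ℝ | 0 ≤ s ∧ s ≤ t ∧ t ≤ w s + s}

/-- The nonnegative quadrant `[0,∞)²`. -/
def Q : Set (ℝ × ℝ) := {p | 0 ≤ p.1 ∧ 0 ≤ p.2}

/-- The shift `B_x = {y ∈ [0,∞)² : y − x ∈ B}` of a set `B ⊆ [0,∞)²`. -/
def shift (B : Set (ℝ × ℝ)) (x : ℝ × ℝ) : Set (ℝ × ℝ) :=
  {y | y ∈ Q ∧ (y.1 - x.1, y.2 - x.2) ∈ B}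

/-- Diagonal shift `B_t = B_{(t,t)}`. -/
def shiftd (B : Set (ℝ × ℝ)) (t : ℝ) : Set (ℝ × ℝ) := shift B (t, t)

/-- The set `C = ([0,∞)×{0}) ∪ ({0}×[0,∞))`. -/
def Cset : Set (ℝ × ℝ) := {p | (0 ≤ p.1 ∧ p.2 = 0) ∨ (p.1 = 0 ∧ 0 ≤ p.2)}

/-- The `κ`-enlargement `B^κ = {x ∈ [0,∞)² : inf_{y ∈ B} ‖x−y‖ < κ}` (Euclidean norm). -/
def enlarge (B : Set (ℝ × ℝ)) (κ : ℝ) : Set (ℝ × ℝ) :=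
  {x | x ∈ Q ∧ ∃ y ∈ B, Real.sqrt ((x.1 - y.1) ^ 2 + (x.2 - y.2) ^ 2) < κ}

/-- `w_ϑ = sup {x ≥ 0 : ϑ_+([x,∞)×[0,∞)) > 0}` for a `K`-tuple `ϑ` of measures on `[0,∞)²`. -/
def wMeas {K : ℕ} (ϑ : Fin K → MeasureTheory.Measure (ℝ × ℝ)) : ℝ :=
  sSup {x : ℝ | 0 ≤ x ∧ 0 < ∑ k, ϑ k (Set.Ici x ×ˢ Set.Ici (0:ℝ))}

/-- Membership in the set `I` of admissible initial measures: each `ϑ k` is a finite Borel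
measure on `[0,∞)²`; (I.1) the superposition charges no corner set `C_x`, `x ∈ [0,∞)²`;
(I.2) `w_ϑ < ∞`; (I.3) `max_k G_k(w_ϑ − ε) > 0` for every `ε > 0`. -/
def MemI {K : ℕ} (D : Data K) (ϑ : Fin K → MeasureTheory.Measure (ℝ × ℝ)) : Prop :=
  (∀ k, IsFiniteMeasure (ϑ k)) ∧
  (∀ k, ϑ k Qᶜ = 0) ∧
  (∀ x ∈ Q, (∑ k, ϑ k (shift Cset x)) = 0) ∧
  BddAbove {x : ℝ | 0 ≤ x ∧ 0 < ∑ k, ϑ k (Set.Ici x ×ˢ Set.Ici (0:ℝ))} ∧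
  (∀ ε : ℝ, 0 < ε → ∃ k, 0 < Gk (D.Γ k) (wMeas ϑ - ε))

/-- `δ⁺_w`: the Dirac measure at `w` if `w > 0`, and the zero measure otherwise. -/
def deltaPlus (w : ℝ) : MeasureTheory.Measure ℝ :=
  if 0 < w then MeasureTheory.Measure.dirac w else 0

instance (w : ℝ) : SFinite (deltaPlus w) := by
  unfold deltaPlus; split_ifs <;> infer_instance

/-- `(δ⁺_w × Γ)(B)`, as a real number. -/
def kern (Γ : MeasureTheory.Measure ℝ) (w : ℝ) (B : Set (ℝ × ℝ)) : ℝ :=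
  (((deltaPlus w).prod Γ) B).toReal

/-- A (measure-valued) fluid model solution with initial measure `ϑ`: a family
`ζ(t) = (ζ_1(t),…,ζ_K(t))` of finite Borel measures on `[0,∞)²` with `ζ(0) = ϑ` satisfying
`ζ_k(t)(B) = ϑ_k(B_t) + λ_k ∫_0^t (δ⁺_{w(s)} × Γ_k)(B_{t−s}) ds` for every Borel
`B ⊆ [0,∞)²` and `t ≥ 0`, where `w` is the (unique) workload fluid model solution with
`w(0) = w_ϑ`. -/
def IsFluidSol {K : ℕ} (D : Data K) (ϑ : Fin K → MeasureTheory.Measure (ℝ × ℝ))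
    (ζ : ℝ → Fin K → MeasureTheory.Measure (ℝ × ℝ)) : Prop :=
  ∃ w : ℝ → ℝ, IsWorkloadSol D w ∧ w 0 = wMeas ϑ ∧
    (∀ t : ℝ, 0 ≤ t → ∀ k, IsFiniteMeasure (ζ t k) ∧ ζ t k Qᶜ = 0) ∧
    (∀ k, ζ 0 k = ϑ k) ∧
    (∀ k, ∀ B : Set (ℝ × ℝ), B ⊆ Q → MeasurableSet B → ∀ t : ℝ, 0 ≤ t →
      IntervalIntegrable (fun s => kern (D.Γ k) (w s) (shiftd B (t - s))) volume 0 t ∧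
      ζ t k B = ϑ k (shiftd B t) +
        ENNReal.ofReal (D.lam k * ∫ s in (0:ℝ)..t, kern (D.Γ k) (w s) (shiftd B (t - s))))

/-- The candidate invariant state `θ^w`:
`θ^w_k(B) = λ_k ∫_0^w Γ_k({p ≥ u : (w−u, p−u) ∈ B}) du`. -/
def thetaW {K : ℕ} (D : Data K) (w : ℝ) (k : Fin K) : MeasureTheory.Measure (ℝ × ℝ) :=
  ENNReal.ofReal (D.lam k) •
    MeasureTheory.Measure.map (fun up : ℝ × ℝ => (w - up.1, up.2 - up.1))
      ((((MeasureTheory.volume.restrict (Set.Ioo (0:ℝ) w))).prod (D.Γ k)).restrict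
        {up : ℝ × ℝ | up.1 ≤ up.2})

/-!
Write `W = w_ϑ`. Testing the stationary fluid equation against the rectangles
`[x,∞) × [0,∞)` shows that the workload is constant equal to `W`: if `w(s₀) > W`, the jobs
arriving just after `s₀` put mass into such a rectangle with `x > W`, where `ϑ` has none; if
`w(t) < W`, the mass of `ϑ` in a rectangle with `w(t) < x < W` must come from a job that arrived
at some `s ≤ t` when `w(s) ≥ x + (t - s)`, which is impossible because the workload decreases at
rate at most one. The workload equation then gives `Σ_k ρ_k G_k(W) = 1`, which places `W` between
`w_l` and `w_u`. Finally, for `t > W` the term `ϑ(B_t)` vanishes and the substitution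
`u = t - s` turns the remaining integral into `θ^W(B)`.
-/

open ProbabilityTheory

lemma Gk_nonneg (Γ : Measure ℝ) (x : ℝ) : 0 ≤ Gk Γ x := ENNReal.toReal_nonneg

section Survival

variable (Γ : Measure ℝ) [IsProbabilityMeasure Γ]

lemma Gk_eq_one_sub_cdf : Gk Γ = fun x => 1 - cdf Γ x := by
  ext x
  rw [cdf_eq_real, ← probReal_compl_eq_one_sub measurableSet_Iic, compl_Iic]
  rfl

lemma Gk_antitone : Antitone (Gk Γ) := fun _ _ h => by
  simp only [Gk_eq_one_sub_cdf]
  linarith [(cdf Γ).mono h]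

lemma tendsto_Gk_atTop : Tendsto (Gk Γ) atTop (𝓝 0) := by
  simpa [Gk_eq_one_sub_cdf] using (tendsto_cdf_atTop Γ).const_sub 1

lemma Gk_zero (h : Γ (Iic 0) = 0) : Gk Γ 0 = 1 := by
  simp [Gk_eq_one_sub_cdf, cdf_eq_real, measureReal_def, h]

lemma eventually_Gk_pos (h : Γ (Iic 0) = 0) : ∀ᶠ r in 𝓝[>] 0, 0 < Gk Γ r := by
  have hcont : Tendsto (Gk Γ) (𝓝[≥] 0) (𝓝 (Gk Γ 0)) := by
    simpa only [Gk_eq_one_sub_cdf] using ((cdf Γ).right_continuous 0).const_sub 1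
  rw [Gk_zero Γ h] at hcont
  exact (hcont.mono_left (nhdsWithin_mono _ Ioi_subset_Ici_self)).eventually_const_lt one_pos

end Survival

namespace Data

variable {K : ℕ} (D : Data K)

lemma rho_nonneg (k : Fin K) : 0 ≤ D.rho k := (div_pos (D.lam_pos k) (D.mu_pos k)).le

lemma measure_Iic_zero (k : Fin K) : D.Γ k (Iic 0) = 0 := by
  rw [← Iio_insert, insert_eq]
  exact measure_union_null (D.Γ_noAtom k 0) (D.Γ_null_neg k)

end Data

lemma Data.nonempty_index {K : ℕ} (D : Data K) : Nonempty (Fin K) := by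
  obtain ⟨k, -, -⟩ := Finset.exists_ne_zero_of_sum_ne_zero (zero_lt_one.trans D.rho_gt_one).ne'
  exact ⟨k⟩

/-- `w_l` and `w_u` are the two ends of the level set `{load D = 1}`. -/
def load {K : ℕ} (D : Data K) (u : ℝ) : ℝ := ∑ k, D.rho k * Gk (D.Γ k) u

section Load

variable {K : ℕ} (D : Data K)

lemma load_antitone : Antitone (load D) := fun _ _ h =>
  Finset.sum_le_sum fun k _ => mul_le_mul_of_nonneg_left (Gk_antitone _ h) (D.rho_nonneg k)

lemma tendsto_load_atTop : Tendsto (load D) atTop (𝓝 0) := by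
  have := tendsto_finsetSum Finset.univ fun k _ =>
    (tendsto_Gk_atTop (D.Γ k)).const_mul (D.rho k)
  simp only [mul_zero, Finset.sum_const_zero] at this
  exact this

lemma wl_le {u : ℝ} (hu : 0 ≤ u) (h : load D u ≤ 1) : wl D ≤ u :=
  Real.sSup_le (fun _ hv => not_lt.1 fun huv =>
    (hv.2.trans_le ((load_antitone D huv.le).trans h)).false) hu

lemma le_wu {u : ℝ} (hu : 0 ≤ u) (h : 1 ≤ load D u) : u ≤ wu D := by
  obtain ⟨N, hN⟩ := eventually_atTop.1 ((tendsto_load_atTop D).eventually_lt_const one_pos)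
  exact le_csSup ⟨N, fun v hv => not_lt.1 fun hNv => (hN v hNv.le).not_ge hv.2⟩ ⟨hu, h⟩

end Load

namespace IsWorkloadSol

variable {K : ℕ} {D : Data K} {w : ℝ → ℝ}

lemma le_add_sub (hw : IsWorkloadSol D w) {r s : ℝ} (hr : 0 ≤ r) (hrs : r ≤ s) :
    w r ≤ w s + (s - r) := by
  obtain ⟨-, hint, heq⟩ := hw
  have hmono : ∀ k, D.rho k * ∫ u in (0:ℝ)..r, Gk (D.Γ k) (w u) ≤
      D.rho k * ∫ u in (0:ℝ)..s, Gk (D.Γ k) (w u) := fun k =>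
    mul_le_mul_of_nonneg_left (intervalIntegral.integral_mono_interval le_rfl hr hrs
      (ae_of_all _ fun _ => Gk_nonneg _ _) (hint k s (hr.trans hrs))) (D.rho_nonneg k)
  linarith [heq r hr, heq s (hr.trans hrs),
    Finset.sum_le_sum fun k (_ : k ∈ Finset.univ) => hmono k]

lemma load_eq_one (hw : IsWorkloadSol D w) {c : ℝ} (hc : ∀ t, 0 ≤ t → w t = c) :
    load D c = 1 := by
  have hG : ∀ k, ∫ s in (0:ℝ)..1, Gk (D.Γ k) (w s) = Gk (D.Γ k) c := fun k => by
    rw [intervalIntegral.integral_congr (g := fun _ => Gk (D.Γ k) c) fun s hs => by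
      rw [uIcc_of_le zero_le_one] at hs; simp only [hc s hs.1]]
    simp
  have h1 := hw.2.2 1 zero_le_one
  simp only [hc 1 zero_le_one, hc 0 le_rfl, hG] at h1
  unfold load
  linarith

end IsWorkloadSol

instance (w : ℝ) : IsFiniteMeasure (deltaPlus w) := by
  unfold deltaPlus; split_ifs <;> infer_instance

lemma deltaPlus_of_pos {w : ℝ} (hw : 0 < w) : deltaPlus w = Measure.dirac w := if_pos hw

lemma deltaPlus_Ici_of_lt {w a : ℝ} (h : w < a) : deltaPlus w (Ici a) = 0 := by
  unfold deltaPlus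
  split_ifs
  · simp [Measure.dirac_apply' _ measurableSet_Ici, not_le.2 h]
  · rfl

lemma measurableSet_Q : MeasurableSet Q :=
  (measurableSet_le measurable_const measurable_fst).inter
    (measurableSet_le measurable_const measurable_snd)

lemma Q_eq_rect : Q = Ici 0 ×ˢ Ici 0 := rfl

lemma rect_subset_Q {x : ℝ} (hx : 0 ≤ x) : Ici x ×ˢ Ici 0 ⊆ Q := fun _ hp => ⟨hx.trans hp.1, hp.2⟩

lemma measurableSet_shiftd {B : Set (ℝ × ℝ)} (hB : MeasurableSet B) (u : ℝ) :
    MeasurableSet (shiftd B u) :=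
  measurableSet_Q.inter (((measurable_fst.sub_const u).prodMk (measurable_snd.sub_const u)) hB)

lemma shiftd_subset_rect {B : Set (ℝ × ℝ)} {x : ℝ} (hB : B ⊆ Ici x ×ˢ Ici 0) (u : ℝ) :
    shiftd B u ⊆ Ici (x + u) ×ˢ Ici 0 := by
  rintro y ⟨hyQ, hyB⟩
  have hx : x ≤ y.1 - u := (hB hyB).1
  exact ⟨show x + u ≤ y.1 by linarith, hyQ.2⟩

lemma shiftd_rect {x u : ℝ} (hx : 0 ≤ x) (hu : 0 ≤ u) :
    shiftd (Ici x ×ˢ Ici 0) u = Ici (x + u) ×ˢ Ici u := by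
  ext ⟨y₁, y₂⟩
  simp only [shiftd, shift, Q, mem_ofPred_eq, mem_prod, mem_Ici]
  constructor
  · rintro ⟨-, h₁, h₂⟩
    constructor <;> linarith
  · rintro ⟨h₁, h₂⟩
    refine ⟨⟨?_, ?_⟩, ?_, ?_⟩ <;> linarith

section Kern

variable (Γ : Measure ℝ) [IsFiniteMeasure Γ]

lemma ofReal_kern (w : ℝ) (B : Set (ℝ × ℝ)) :
    ENNReal.ofReal (kern Γ w B) = ((deltaPlus w).prod Γ) B :=
  ENNReal.ofReal_toReal (measure_ne_top _ _)

lemma deltaPlus_prod_shiftd_eq_zero {B : Set (ℝ × ℝ)} {x w u : ℝ} (hB : B ⊆ Ici x ×ˢ Ici 0)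
    (h : w < x + u) : ((deltaPlus w).prod Γ) (shiftd B u) = 0 :=
  measure_mono_null (shiftd_subset_rect hB u) (by
    rw [Measure.prod_prod, deltaPlus_Ici_of_lt h, zero_mul])

lemma kern_shiftd_eq_zero {B : Set (ℝ × ℝ)} {x w u : ℝ} (hB : B ⊆ Ici x ×ˢ Ici 0)
    (h : w < x + u) : kern Γ w (shiftd B u) = 0 := by
  rw [kern, deltaPlus_prod_shiftd_eq_zero Γ hB h, ENNReal.toReal_zero]

lemma kern_shiftd_rect {x w u : ℝ} (hx : 0 ≤ x) (hu : 0 ≤ u) (hw : 0 < w) (h : x + u ≤ w) :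
    kern Γ w (shiftd (Ici x ×ˢ Ici 0) u) = (Γ (Ici u)).toReal := by
  rw [kern, shiftd_rect hx hu, Measure.prod_prod, deltaPlus_of_pos hw,
    Measure.dirac_apply_of_mem (show w ∈ Ici (x + u) from h), one_mul]

lemma deltaPlus_prod_shiftd {B : Set (ℝ × ℝ)} (hBQ : B ⊆ Q) (hB : MeasurableSet B) {w u : ℝ}
    (hu : 0 < u) (huw : u < w) :
    ((deltaPlus w).prod Γ) (shiftd B u) = Γ {p | u ≤ p ∧ (w - u, p - u) ∈ B} := by
  rw [deltaPlus_of_pos (hu.trans huw), Measure.dirac_prod,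
    Measure.map_apply measurable_prodMk_left (measurableSet_shiftd hB u)]
  congr 1
  ext p
  simp only [mem_preimage, shiftd, shift, Q, mem_ofPred_eq]
  constructor
  · rintro ⟨-, hpB⟩
    exact ⟨by linarith [(hBQ hpB).2], hpB⟩
  · rintro ⟨hup, hpB⟩
    exact ⟨⟨by linarith, by linarith⟩, hpB⟩

lemma lintegral_deltaPlus_prod_shiftd {B : Set (ℝ × ℝ)} (hBQ : B ⊆ Q) (hB : MeasurableSet B)
    {w t : ℝ} (hwt : w ≤ t) :
    ∫⁻ u in Ioc 0 t, ((deltaPlus w).prod Γ) (shiftd B u) =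
      ∫⁻ u in Ioo 0 w, Γ {p | u ≤ p ∧ (w - u, p - u) ∈ B} := by
  -- the section at `u = w` need not vanish, but it is a null point
  have hne : ∀ᵐ u ∂volume.restrict (Ioc 0 t), u ∉ ({w} : Set ℝ) :=
    ae_restrict_of_ae (measure_eq_zero_iff_ae_notMem.1 (measure_singleton w))
  have hae : (fun u => ((deltaPlus w).prod Γ) (shiftd B u)) =ᵐ[volume.restrict (Ioc 0 t)]
      (Ioo 0 w).indicator fun u => Γ {p | u ≤ p ∧ (w - u, p - u) ∈ B} := by
    filter_upwards [ae_restrict_mem measurableSet_Ioc, hne] with u hu huw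
    rcases lt_or_gt_of_ne huw with h | h
    · rw [indicator_of_mem (show u ∈ Ioo 0 w from ⟨hu.1, h⟩),
        deltaPlus_prod_shiftd Γ hBQ hB hu.1 h]
    · rw [indicator_of_notMem fun h' => h'.2.not_gt h,
        deltaPlus_prod_shiftd_eq_zero Γ (Q_eq_rect ▸ hBQ) (by linarith)]
  rw [lintegral_congr_ae hae, setLIntegral_indicator measurableSet_Ioo,
    inter_eq_left.2 (Ioo_subset_Ioc_self.trans (Ioc_subset_Ioc_right hwt))]

lemma ofReal_integral_kern_shiftd {B : Set (ℝ × ℝ)} {w t : ℝ} (ht : 0 ≤ t)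
    (hint : IntervalIntegrable (fun s => kern Γ w (shiftd B (t - s))) volume 0 t) :
    ENNReal.ofReal (∫ s in (0:ℝ)..t, kern Γ w (shiftd B (t - s))) =
      ∫⁻ u in Ioc 0 t, ((deltaPlus w).prod Γ) (shiftd B u) := by
  have hint' : IntegrableOn (fun u => kern Γ w (shiftd B u)) (Ioc 0 t) := by
    have := hint.comp_sub_left t
    simp only [sub_sub_cancel, sub_self, sub_zero] at this
    exact (intervalIntegrable_iff_integrableOn_Ioc_of_le ht).1 this.symm
  rw [intervalIntegral.integral_comp_sub_left (fun u => kern Γ w (shiftd B u)), sub_self,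
    sub_zero, intervalIntegral.integral_of_le ht,
    ofReal_integral_eq_lintegral_ofReal hint' (ae_of_all _ fun _ => ENNReal.toReal_nonneg)]
  simp only [ofReal_kern]

end Kern

section SupportBound

variable {K : ℕ} {ϑ : Fin K → Measure (ℝ × ℝ)}

lemma wMeas_nonneg : 0 ≤ wMeas ϑ := Real.sSup_nonneg fun _ hx => hx.1

lemma measure_rect_eq_zero_of_wMeas_lt
    (hbdd : BddAbove {x : ℝ | 0 ≤ x ∧ 0 < ∑ k, ϑ k (Ici x ×ˢ Ici (0:ℝ))}) {x : ℝ}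
    (hx : wMeas ϑ < x) (k : Fin K) : ϑ k (Ici x ×ˢ Ici 0) = 0 := by
  have hsum : ∑ j, ϑ j (Ici x ×ˢ Ici 0) = 0 := by
    by_contra h
    exact hx.not_ge (le_csSup hbdd ⟨wMeas_nonneg.trans hx.le, pos_iff_ne_zero.2 h⟩)
  exact Finset.sum_eq_zero_iff.1 hsum k (Finset.mem_univ k)

lemma exists_measure_rect_pos {x : ℝ} (hx₀ : 0 ≤ x) (hx : x < wMeas ϑ) :
    ∃ k, 0 < ϑ k (Ici x ×ˢ Ici 0) := by
  by_contra! h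
  refine hx.not_ge (Real.sSup_le (fun y hy => not_lt.1 fun hxy => hy.2.ne' ?_) hx₀)
  exact Finset.sum_eq_zero fun k _ => measure_mono_null
    (prod_mono (Ici_subset_Ici.2 hxy.le) subset_rfl) (nonpos_iff_eq_zero.1 (h k))

end SupportBound

lemma Measure.ext_of_compl_null {α : Type*} [MeasurableSpace α] {μ ν : Measure α} {S : Set α}
    (hS : MeasurableSet S) (hμ : μ Sᶜ = 0) (hν : ν Sᶜ = 0)
    (h : ∀ B ⊆ S, MeasurableSet B → μ B = ν B) : μ = ν :=
  Measure.ext fun s hs => by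
    rw [← measure_inter_conull hμ, ← measure_inter_conull hν]
    exact h _ inter_subset_right (hs.inter hS)

section Theta

variable {K : ℕ} (D : Data K) (W : ℝ) (k : Fin K)

lemma thetaW_apply {B : Set (ℝ × ℝ)} (hB : MeasurableSet B) :
    thetaW D W k B = ENNReal.ofReal (D.lam k) *
      ∫⁻ u in Ioo 0 W, D.Γ k {p | u ≤ p ∧ (W - u, p - u) ∈ B} := by
  have hf : Measurable fun up : ℝ × ℝ => (W - up.1, up.2 - up.1) :=
    (measurable_const.sub measurable_fst).prodMk (measurable_snd.sub measurable_fst)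
  rw [thetaW, Measure.smul_apply, smul_eq_mul, Measure.map_apply hf hB,
    Measure.restrict_apply (hf hB),
    Measure.prod_apply ((hf hB).inter (measurableSet_le measurable_fst measurable_snd))]
  congr 1
  exact lintegral_congr fun u => congrArg _ (ext fun p => and_comm)

lemma thetaW_compl_Q : thetaW D W k Qᶜ = 0 := by
  rw [thetaW_apply D W k measurableSet_Q.compl]
  refine mul_eq_zero_of_right _ (setLIntegral_eq_zero measurableSet_Ioo fun u hu => ?_)
  have hempty : {p | u ≤ p ∧ (W - u, p - u) ∈ Qᶜ} = ∅ := eq_empty_of_forall_notMem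
    fun p ⟨hup, hpQ⟩ => hpQ ⟨sub_nonneg.2 hu.2.le, sub_nonneg.2 hup⟩
  rw [Pi.zero_apply, hempty, measure_empty]

end Theta

/-- The fluid equation of a solution that stays at `ϑ`, driven by the workload `w`. -/
def IsStationary {K : ℕ} (D : Data K) (ϑ : Fin K → Measure (ℝ × ℝ)) (w : ℝ → ℝ) : Prop :=
  ∀ k, ∀ B ⊆ Q, MeasurableSet B → ∀ t : ℝ, 0 ≤ t →
    IntervalIntegrable (fun s => kern (D.Γ k) (w s) (shiftd B (t - s))) volume 0 t ∧
      ϑ k B = ϑ k (shiftd B t) +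
        ENNReal.ofReal (D.lam k * ∫ s in (0:ℝ)..t, kern (D.Γ k) (w s) (shiftd B (t - s)))

lemma IsFluidSol.exists_isStationary {K : ℕ} {D : Data K} {ϑ : Fin K → Measure (ℝ × ℝ)}
    {ζ : ℝ → Fin K → Measure (ℝ × ℝ)} (hζ : IsFluidSol D ϑ ζ)
    (hinv : ∀ t : ℝ, 0 ≤ t → ∀ k, ζ t k = ϑ k) :
    ∃ w, IsWorkloadSol D w ∧ w 0 = wMeas ϑ ∧ IsStationary D ϑ w := by
  obtain ⟨w, hw, hw0, -, -, hfluid⟩ := hζ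
  refine ⟨w, hw, hw0, fun k B hBQ hB t ht => ?_⟩
  obtain ⟨hint, heq⟩ := hfluid k B hBQ hB t ht
  exact ⟨hint, hinv t ht k ▸ heq⟩

namespace IsStationary

variable {K : ℕ} {D : Data K} {ϑ : Fin K → Measure (ℝ × ℝ)} {w : ℝ → ℝ}

lemma exists_le_of_measure_rect_pos (hst : IsStationary D ϑ w) {k : Fin K} {x t : ℝ}
    (hx : 0 ≤ x) (ht : 0 ≤ t) (hshift : ϑ k (shiftd (Ici x ×ˢ Ici 0) t) = 0)
    (hpos : 0 < ϑ k (Ici x ×ˢ Ici 0)) : ∃ s ∈ Icc 0 t, x + (t - s) ≤ w s := by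
  by_contra! h
  have hzero : ∫ s in (0:ℝ)..t, kern (D.Γ k) (w s) (shiftd (Ici x ×ˢ Ici 0) (t - s)) = 0 := by
    rw [intervalIntegral.integral_congr (g := 0) fun s hs =>
      kern_shiftd_eq_zero _ subset_rfl (h s (uIcc_of_le ht ▸ hs))]
    simp
  have heq := (hst k _ (rect_subset_Q hx) (measurableSet_Ici.prod measurableSet_Ici) t ht).2
  rw [hshift, hzero, mul_zero, ENNReal.ofReal_zero, add_zero] at heq
  exact hpos.ne' heq

lemma measure_rect_pos (hst : IsStationary D ϑ w) (k : Fin K) {x s₀ ε : ℝ} (hx : 0 < x)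
    (hs₀ : 0 ≤ s₀) (hε : 0 < ε) (hG : 0 < Gk (D.Γ k) ε)
    (hw : ∀ s ∈ Icc s₀ (s₀ + ε), x + (s₀ + ε - s) ≤ w s) :
    0 < ϑ k (Ici x ×ˢ Ici 0) := by
  set t := s₀ + ε
  set f := fun s => kern (D.Γ k) (w s) (shiftd (Ici x ×ˢ Ici 0) (t - s))
  have ht : 0 ≤ t := by linarith
  obtain ⟨hint, heq⟩ :=
    hst k _ (rect_subset_Q hx.le) (measurableSet_Ici.prod measurableSet_Ici) t ht
  have hlow : ∀ s ∈ Icc s₀ t, Gk (D.Γ k) ε ≤ f s := fun s hs => by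
    simp only [f]
    rw [kern_shiftd_rect _ hx.le (by linarith [hs.2]) (by linarith [hw s hs, hs.2]) (hw s hs)]
    exact (Gk_antitone _ (by linarith [hs.1] : t - s ≤ ε)).trans
      (ENNReal.toReal_mono (measure_ne_top _ _) (measure_mono Ioi_subset_Ici_self))
  have hI : ε * Gk (D.Γ k) ε ≤ ∫ s in (0:ℝ)..t, f s := calc
    ε * Gk (D.Γ k) ε = ∫ _ in s₀..t, Gk (D.Γ k) ε := by simp [t]
    _ ≤ ∫ s in s₀..t, f s := intervalIntegral.integral_mono_on (by linarith)
        intervalIntegrable_const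
        (hint.mono_set (uIcc_subset_uIcc (mem_uIcc_of_le hs₀ (by linarith)) right_mem_uIcc)) hlow
    _ ≤ ∫ s in (0:ℝ)..t, f s := intervalIntegral.integral_mono_interval hs₀ (by linarith) le_rfl
        (ae_of_all _ fun _ => ENNReal.toReal_nonneg) hint
  rw [heq]
  exact (ENNReal.ofReal_pos.2 (mul_pos (D.lam_pos k) ((mul_pos hε hG).trans_le hI))).trans_le
    le_add_self

lemma le_wMeas (hst : IsStationary D ϑ w) (hw : IsWorkloadSol D w)
    (hbdd : BddAbove {x : ℝ | 0 ≤ x ∧ 0 < ∑ k, ϑ k (Ici x ×ˢ Ici (0:ℝ))})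
    {s₀ : ℝ} (hs₀ : 0 ≤ s₀) : w s₀ ≤ wMeas ϑ := by
  by_contra! h
  obtain ⟨k⟩ := D.nonempty_index
  obtain ⟨ε, ⟨hε, hεη⟩, hG⟩ := (Filter.Eventually.and (Ioo_mem_nhdsGT (sub_pos.2 h))
    (eventually_Gk_pos _ (D.measure_Iic_zero k))).exists
  have hx : wMeas ϑ < w s₀ - ε := by linarith
  refine (hst.measure_rect_pos k (wMeas_nonneg.trans_lt hx) hs₀ hε hG fun s hs => ?_).ne'
    (measure_rect_eq_zero_of_wMeas_lt hbdd hx k)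
  linarith [hw.le_add_sub hs₀ hs.1]

lemma wMeas_le (hst : IsStationary D ϑ w) (hw : IsWorkloadSol D w) (hw0 : w 0 = wMeas ϑ)
    (hbdd : BddAbove {x : ℝ | 0 ≤ x ∧ 0 < ∑ k, ϑ k (Ici x ×ˢ Ici (0:ℝ))})
    {t : ℝ} (ht : 0 ≤ t) : wMeas ϑ ≤ w t := by
  rcases ht.eq_or_lt with rfl | ht
  · exact hw0.ge
  by_contra! hlt
  obtain ⟨x, hx, hxW⟩ := exists_between (max_lt hlt (sub_lt_self _ ht))
  rw [max_lt_iff] at hx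
  have hx₀ : 0 ≤ x := (hw.1 t ht.le).trans hx.1.le
  obtain ⟨k, hk⟩ := exists_measure_rect_pos hx₀ hxW
  have hshift : ϑ k (shiftd (Ici x ×ˢ Ici 0) t) = 0 :=
    measure_mono_null (shiftd_subset_rect subset_rfl t)
      (measure_rect_eq_zero_of_wMeas_lt hbdd (by linarith) k)
  obtain ⟨s, hs, hxs⟩ := hst.exists_le_of_measure_rect_pos hx₀ ht.le hshift hk
  linarith [hw.le_add_sub hs.1 hs.2]

lemma eq_thetaW (hst : IsStationary D ϑ w) (hQc : ∀ k, ϑ k Qᶜ = 0)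
    (hbdd : BddAbove {x : ℝ | 0 ≤ x ∧ 0 < ∑ k, ϑ k (Ici x ×ˢ Ici (0:ℝ))})
    (hconst : ∀ t, 0 ≤ t → w t = wMeas ϑ) (k : Fin K) : ϑ k = thetaW D (wMeas ϑ) k := by
  refine Measure.ext_of_compl_null measurableSet_Q (hQc k) (thetaW_compl_Q D _ k)
    fun B hBQ hB => ?_
  set W := wMeas ϑ
  have ht : 0 ≤ W + 1 := by linarith [wMeas_nonneg (ϑ := ϑ)]
  obtain ⟨hint, heq⟩ := hst k B hBQ hB (W + 1) ht
  have hfun : EqOn (fun s => kern (D.Γ k) (w s) (shiftd B (W + 1 - s)))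
      (fun s => kern (D.Γ k) W (shiftd B (W + 1 - s))) (uIcc 0 (W + 1)) := fun s hs => by
    rw [uIcc_of_le ht] at hs
    simp only [hconst s hs.1]
  have hshift : ϑ k (shiftd B (W + 1)) = 0 := by
    have hsub := shiftd_subset_rect (Q_eq_rect ▸ hBQ) (W + 1)
    rw [zero_add] at hsub
    exact measure_mono_null hsub (measure_rect_eq_zero_of_wMeas_lt hbdd (lt_add_one W) k)
  rw [heq, hshift, zero_add, intervalIntegral.integral_congr hfun,
    ENNReal.ofReal_mul (D.lam_pos k).le,
    ofReal_integral_kern_shiftd _ ht (hint.congr (hfun.mono uIoc_subset_uIcc)),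
    lintegral_deltaPlus_prod_shiftd _ hBQ hB (lt_add_one W).le, thetaW_apply D W k hB]

end IsStationary

/-- If `ϑ ∈ I` is an invariant state (the fluid model solution with initial
measure `ϑ` is constant), then `w_l ≤ w_ϑ ≤ w_u` and `ϑ = θ^{w_ϑ}`. -/
theorem invariant_is_thetaW {K : ℕ} (D : Data K)
    (ϑ : Fin K → MeasureTheory.Measure (ℝ × ℝ)) (hϑ : MemI D ϑ)
    (ζ : ℝ → Fin K → MeasureTheory.Measure (ℝ × ℝ)) (hζ : IsFluidSol D ϑ ζ)
    (hinv : ∀ t : ℝ, 0 ≤ t → ∀ k, ζ t k = ϑ k) :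
    wl D ≤ wMeas ϑ ∧ wMeas ϑ ≤ wu D ∧ ∀ k, ϑ k = thetaW D (wMeas ϑ) k := by
  obtain ⟨-, hQc, -, hbdd, -⟩ := hϑ
  obtain ⟨w, hw, hw0, hst⟩ := hζ.exists_isStationary hinv
  have hconst : ∀ t, 0 ≤ t → w t = wMeas ϑ := fun t ht =>
    (hst.le_wMeas hw hbdd ht).antisymm (hst.wMeas_le hw hw0 hbdd ht)
  have hload : load D (wMeas ϑ) = 1 := hw.load_eq_one hconst
  exact ⟨wl_le D wMeas_nonneg hload.le, le_wu D wMeas_nonneg hload.ge,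
    hst.eq_thetaW hQc hbdd hconst⟩

end OverloadedFIFO
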